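/- Let P be a partial order on a finite set X that is the disjoint union of chains C₁, …, C_w of sizes c₁, …, c_w summing to n. Then the graph entropy of the incomparability graph of P is exactly Σ_{i=1}^{w} (c_i/n) log₂(n/c_i), i.e., H(Ḡ) = Σ_i (c_i/n) log₂(n/c_i) where Ḡ is the complete multipartite graph with parts C₁, …, C_w. -/

import Mathlib

open scoped Classical

/-- Körner's graph entropy: `H(G) = min_{λ ∈ STAB(G)} -(1/n) ∑_u log₂ λ(u)`, where
`STAB(G)` is the convex hull of characteristic vectors of independent sets (the minimum is
taken over `λ` with strictly positive coordinates, since zero coordinates give `+∞`). -/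
noncomputable def graphEntropy {V : Type*} [Fintype V] (G : SimpleGraph V) : ℝ :=
  sInf {e : ℝ | ∃ lam ∈ convexHull ℝ {x : V → ℝ | ∃ S : Finset V,
      (∀ a ∈ S, ∀ b ∈ S, ¬ G.Adj a b) ∧ x = fun v => if v ∈ S then (1 : ℝ) else 0},
    (∀ v, 0 < lam v) ∧
      e = -(1 / (Fintype.card V : ℝ)) * ∑ v, Real.logb 2 (lam v)}

/-!
If `q` is a positive point of `STAB(G)`, then `log x ≤ x - 1` gives
`∑ log λ(v) ≤ ∑ log q(v)` for every positive `λ` with `∑ λ(v) / q(v) ≤ n`. That inequality is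
linear in `λ`, so it holds on all of `STAB(G)` as soon as it holds at the indicators of independent
sets, i.e. `∑_{v ∈ S} 1 / q(v) ≤ n`; then `q` minimises the entropy objective. For the complete
multipartite graph take `q(v) = c_i / n` for `v ∈ C_i`: it is the convex combination of the part
indicators with weights `c_i / n`, and an independent set lies in a single part `C_i`, so
`∑_{v ∈ S} n / c_i ≤ c_i · n / c_i = n`.
-/

open Finset Real

theorem sum_log_le_sum_log_of_sum_div_le {α : Type*} (s : Finset α) {x q : α → ℝ}
    (hx : ∀ i ∈ s, 0 < x i) (hq : ∀ i ∈ s, 0 < q i) (h : ∑ i ∈ s, x i / q i ≤ #s) :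
    ∑ i ∈ s, log (x i) ≤ ∑ i ∈ s, log (q i) := by
  have hterm : ∀ i ∈ s, log (x i) - log (q i) ≤ x i / q i - 1 := fun i hi => by
    rw [← log_div (hx i hi).ne' (hq i hi).ne']
    exact log_le_sub_one_of_pos (div_pos (hx i hi) (hq i hi))
  have hsum := sum_le_sum hterm
  rw [sum_sub_distrib, sum_sub_distrib, sum_const, nsmul_one] at hsum
  linarith

namespace SimpleGraph

variable {V : Type*} [Fintype V]

def indepIndicators (G : SimpleGraph V) : Set (V → ℝ) :=
  {x : V → ℝ | ∃ S : Finset V,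
      (∀ a ∈ S, ∀ b ∈ S, ¬ G.Adj a b) ∧ x = fun v => if v ∈ S then (1 : ℝ) else 0}

def stab (G : SimpleGraph V) : Set (V → ℝ) :=
  convexHull ℝ (indepIndicators G)

noncomputable def entropyObjective (lam : V → ℝ) : ℝ :=
  -(1 / (Fintype.card V : ℝ)) * ∑ v, logb 2 (lam v)

theorem entropyObjective_le_of_sum_div_le {lam q : V → ℝ} (hlam : ∀ v, 0 < lam v)
    (hq : ∀ v, 0 < q v) (h : ∑ v, lam v / q v ≤ Fintype.card V) :
    entropyObjective q ≤ entropyObjective lam := by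
  have hlog := sum_log_le_sum_log_of_sum_div_le univ (fun v _ => hlam v) (fun v _ => hq v)
    (by simpa using h)
  simp only [entropyObjective, logb, ← sum_div, neg_mul, neg_le_neg_iff]
  gcongr

theorem graphEntropy_eq_of_forall_isIndepSet_sum_inv_le (G : SimpleGraph V) {q : V → ℝ}
    (hqG : q ∈ stab G) (hq : ∀ v, 0 < q v)
    (hindep : ∀ S : Finset V, G.IsIndepSet (S : Set V) → ∑ v ∈ S, (q v)⁻¹ ≤ Fintype.card V) :
    graphEntropy G = entropyObjective q := by
  have hhalf : Convex ℝ {x : V → ℝ | ∑ v, x v * (q v)⁻¹ ≤ Fintype.card V} :=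
    convex_halfSpace_le ⟨fun x y => by simp only [Pi.add_apply, add_mul, sum_add_distrib],
      fun c x => by simp only [Pi.smul_apply, smul_eq_mul, mul_sum, mul_assoc]⟩ _
  have hhull : ∀ lam ∈ stab G, ∑ v, lam v * (q v)⁻¹ ≤ Fintype.card V := by
    refine fun lam hlam => convexHull_min ?_ hhalf hlam
    rintro _ ⟨S, hS, rfl⟩
    simpa [ite_mul, sum_ite_mem] using hindep S fun a ha b hb _ => hS a ha b hb
  refine IsLeast.csInf_eq ⟨⟨q, hqG, hq, rfl⟩, ?_⟩
  rintro _ ⟨lam, hlam, hpos, rfl⟩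
  exact entropyObjective_le_of_sum_div_le hpos hq (by simpa [div_eq_mul_inv] using hhull lam hlam)

section CompleteMultipartite

variable {ι : Type*} [DecidableEq ι] (f : V → ι)

noncomputable def partFraction (v : V) : ℝ := #{u | f u = f v} / Fintype.card V

theorem partFraction_pos (v : V) : 0 < partFraction f v := by
  have hn : 0 < Fintype.card V := Fintype.card_pos_iff.mpr ⟨v⟩
  exact div_pos (by exact_mod_cast card_pos.mpr ⟨v, by simp⟩) (by exact_mod_cast hn)

theorem sum_inv_partFraction_le {S : Finset V}
    (hS : ((⊤ : SimpleGraph ι).comap f).IsIndepSet (S : Set V)) :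
    ∑ v ∈ S, (partFraction f v)⁻¹ ≤ Fintype.card V := by
  rcases S.eq_empty_or_nonempty with rfl | ⟨a, ha⟩
  · simp
  have hsame : ∀ v ∈ S, f v = f a := fun v hv => by
    by_contra hne
    exact hS hv ha (by rintro rfl; exact hne rfl) (by simpa using hne)
  have hsub : S ⊆ ({u | f u = f a} : Finset V) := fun v hv => by simpa using hsame v hv
  have hpos : (0 : ℝ) < #{u | f u = f a} := by
    exact_mod_cast card_pos.mpr ⟨a, by simp⟩
  calc ∑ v ∈ S, (partFraction f v)⁻¹ = #S * (Fintype.card V / #{u | f u = f a}) := by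
        rw [sum_congr rfl fun v hv => by rw [partFraction, hsame v hv], sum_const, nsmul_eq_mul,
          inv_div]
    _ ≤ #{u | f u = f a} * (Fintype.card V / #{u | f u = f a}) := by gcongr
    _ = Fintype.card V := mul_div_cancel₀ _ hpos.ne'

variable [Fintype ι]

theorem partFraction_mem_stab : partFraction f ∈ stab ((⊤ : SimpleGraph ι).comap f) := by
  rcases isEmpty_or_nonempty V with hV | hV
  · exact subset_convexHull ℝ _ ⟨∅, by simp, funext fun v => hV.elim v⟩
  have hparts : ∀ i ∈ (univ : Finset ι),
      (fun v => if v ∈ ({u | f u = i} : Finset V) then (1 : ℝ) else 0) ∈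
        indepIndicators ((⊤ : SimpleGraph ι).comap f) := fun i _ =>
    ⟨_, fun a ha b hb => by simp_all, rfl⟩
  have hsum : ∑ i, (#{u | f u = i} : ℝ) = Fintype.card V := by
    exact_mod_cast (card_eq_sum_card_fiberwise (f := f) (by simp)).symm
  have hcenter : centerMass univ (fun i => (#{u | f u = i} : ℝ))
      (fun i v => if v ∈ ({u | f u = i} : Finset V) then (1 : ℝ) else 0) = partFraction f := by
    funext v
    simp [centerMass, hsum, partFraction, div_eq_inv_mul]
  exact hcenter ▸ centerMass_mem_convexHull univ (fun i _ => by positivity)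
    (by rw [hsum]; exact_mod_cast Fintype.card_pos) hparts

theorem entropyObjective_partFraction :
    entropyObjective (partFraction f) = ∑ i, (#{v | f v = i} : ℝ) / Fintype.card V *
      logb 2 (Fintype.card V / #{v | f v = i}) := by
  have hfibers : ∑ v, logb 2 (partFraction f v) =
      ∑ i, #{v | f v = i} * logb 2 (#{v | f v = i} / Fintype.card V) := by
    rw [← sum_fiberwise univ f]
    refine sum_congr rfl fun i _ => ?_
    rw [sum_congr rfl fun v hv => by rw [partFraction, (mem_filter.mp hv).2], sum_const,
      nsmul_eq_mul]
  rw [entropyObjective, hfibers, mul_sum]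
  refine sum_congr rfl fun i _ => ?_
  rw [← neg_neg (logb 2 (_ / Fintype.card V)), ← logb_inv, inv_div]
  ring

theorem graphEntropy_comap_top :
    graphEntropy ((⊤ : SimpleGraph ι).comap f) = ∑ i, (#{v | f v = i} : ℝ) / Fintype.card V *
      logb 2 (Fintype.card V / #{v | f v = i}) := by
  rw [← entropyObjective_partFraction]
  exact graphEntropy_eq_of_forall_isIndepSet_sum_inv_le _ (partFraction_mem_stab f)
    (partFraction_pos f) fun _ => sum_inv_partFraction_le f

end CompleteMultipartite

end SimpleGraph

theorem stmt18_general {V : Type*} [Fintype V] (G : SimpleGraph V)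
    (w : ℕ) (C : Fin w → Finset V)
    (hpart : ∀ v : V, ∃! i, v ∈ C i)
    (hadj : ∀ a b : V, G.Adj a b ↔ ∃ i j, i ≠ j ∧ a ∈ C i ∧ b ∈ C j) :
    graphEntropy G = ∑ i, ((C i).card : ℝ) / (Fintype.card V : ℝ) *
      Real.logb 2 ((Fintype.card V : ℝ) / ((C i).card : ℝ)) := by
  choose f hf hf_unique using hpart
  have hC : ∀ i, C i = ({v | f v = i} : Finset V) := fun i => by
    ext v
    simpa using ⟨fun h => (hf_unique v i h).symm, fun h => h ▸ hf v⟩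
  have hG : G = (⊤ : SimpleGraph (Fin w)).comap f := by
    ext a b
    simp [hadj, hC]
  subst hG
  simp_rw [hC]
  exact SimpleGraph.graphEntropy_comap_top f

/-- If `G` is the complete multipartite graph with parts `C₁, …, C_w` of sizes `c₁, …, c_w`
(the incomparability graph of a disjoint union of `w` chains), then
`H(G) = ∑ᵢ (cᵢ/n) log₂ (n/cᵢ)`. -/
theorem stmt18 {V : Type*} [Fintype V] (G : SimpleGraph V)
    (w : ℕ) (C : Fin w → Finset V)
    (hpart : ∀ v : V, ∃! i, v ∈ C i)
    (hne : ∀ i, 0 < (C i).card)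
    (hadj : ∀ a b : V, G.Adj a b ↔ ∃ i j, i ≠ j ∧ a ∈ C i ∧ b ∈ C j) :
    graphEntropy G = ∑ i, ((C i).card : ℝ) / (Fintype.card V : ℝ) *
      Real.logb 2 ((Fintype.card V : ℝ) / ((C i).card : ℝ)) :=
  stmt18_general G w C hpart hadj
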